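/- For every stateless realtime deterministic pushdown automaton accepting L_n = { b^k a | 1 ≤ k ≤ n−1 } (n ≥ 2), the pushdown symbols X_1, ..., X_{n−1} reached on top after reading b, b^2, ..., b^{n−1} respectively are pairwise distinct. -/
import Mathlib


/-- The binary input alphabet `{a, b}`. -/
inductive Bin : Type
  | a : Bin
  | b : Bin
deriving DecidableEq

/-- The language `L_n = { b^k a | 1 ≤ k ≤ n-1 }` over `{a, b}`. -/
def Ln (n : ℕ) : Set (List Bin) :=
  {w | ∃ k, 1 ≤ k ∧ k ≤ n - 1 ∧ w = List.replicate k Bin.b ++ [Bin.a]}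

/-- A stateless realtime (deterministic, no ε-moves) pushdown automaton over
input alphabet `A`: pushdown alphabet `Γ`, partial transition function `δ`,
and an initial pushdown string `α ≠ []`. -/
structure SRPDA (A : Type) where
  Γ : Type
  [instΓ : Fintype Γ]
  δ : Γ → A → Option (List Γ)
  α : List Γ
  α_ne : α ≠ []

attribute [instance] SRPDA.instΓ

/-- `M.Steps γ w γ'` : starting with pushdown content `γ` (top of the pushdown
is the head of the list), the automaton reads the input string `w` and ends
with pushdown content `γ'`. -/
inductive SRPDA.Steps {A : Type} (M : SRPDA A) : List M.Γ → List A → List M.Γ → Prop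
  | refl (γ : List M.Γ) : SRPDA.Steps M γ [] γ
  | step {X : M.Γ} {γ w : List M.Γ} {a : A} {ws : List A} {γ' : List M.Γ} :
      M.δ X a = some w → SRPDA.Steps M (w ++ γ) ws γ' →
      SRPDA.Steps M (X :: γ) (a :: ws) γ'

/-- Acceptance by empty pushdown. -/
def SRPDA.Accepts {A : Type} (M : SRPDA A) (w : List A) : Prop :=
  M.Steps M.α w []


theorem SRPDA.steps_append {A : Type} (M : SRPDA A) {γ w γ' w' γ''}
    (h1 : M.Steps γ w γ') (h2 : M.Steps γ' w' γ'') :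
    M.Steps γ (w ++ w') γ'' := by
  induction h1 with
  | refl => simpa
  | step hδ _ ih => exact SRPDA.Steps.step hδ (ih h2)

theorem SRPDA.steps_split {A : Type} (M : SRPDA A) {γ w γ1 w' γ2}
    (h1 : M.Steps γ w γ1) (h2 : M.Steps γ (w ++ w') γ2) :
    M.Steps γ1 w' γ2 := by
  induction h1 with
  | refl => simpa using h2
  | step hδ _ ih =>
    cases h2 with
    | step hδ' h' =>
      rw [hδ'] at hδ
      cases hδ
      exact ih h'

/-- For every stateless realtime deterministic pushdown automaton
accepting `L_n` (`n ≥ 2`), the pushdown symbols `X_i`, `X_j` reached on top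
(as the sole pushdown content) after reading `b^i`, resp. `b^j`, with
`1 ≤ i < j ≤ n-1`, are distinct. -/
theorem srpda_Ln_top_symbols_distinct (n : ℕ) (hn : 2 ≤ n) (M : SRPDA Bin)
    (hacc : ∀ w : List Bin, M.Accepts w ↔ w ∈ Ln n)
    (i j : ℕ) (hi : 1 ≤ i) (hij : i < j) (hj : j ≤ n - 1)
    (Xi Xj : M.Γ)
    (hXi : M.Steps M.α (List.replicate i Bin.b) [Xi])
    (hXj : M.Steps M.α (List.replicate j Bin.b) [Xj]) :
    Xi ≠ Xj := by
  intro heq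
  -- X_i empties on b^(n-1-i) ++ [a]
  have hfull : M.Steps M.α (List.replicate (n-1) Bin.b ++ [Bin.a]) [] := by
    rw [show (M.Steps M.α (List.replicate (n-1) Bin.b ++ [Bin.a]) [] ) = M.Accepts (List.replicate (n-1) Bin.b ++ [Bin.a]) from rfl, hacc]
    exact ⟨n-1, by omega, le_refl _, rfl⟩
  have hdecomp : List.replicate (n-1) Bin.b ++ [Bin.a]
      = List.replicate i Bin.b ++ (List.replicate (n-1-i) Bin.b ++ [Bin.a]) := by
    rw [← List.append_assoc, ← List.replicate_add]
    congr 2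
    omega
  rw [hdecomp] at hfull
  have hXiEmpty : M.Steps [Xi] (List.replicate (n-1-i) Bin.b ++ [Bin.a]) [] :=
    M.steps_split hXi hfull
  have hbig : M.Steps M.α (List.replicate j Bin.b ++ (List.replicate (n-1-i) Bin.b ++ [Bin.a])) [] :=
    M.steps_append hXj (heq ▸ hXiEmpty)
  have : (List.replicate j Bin.b ++ (List.replicate (n-1-i) Bin.b ++ [Bin.a])) ∈ Ln n :=
    (hacc _).1 hbig
  obtain ⟨k, hk1, hk2, hk3⟩ := this
  have := congrArg List.length hk3
  simp [List.length_replicate] at this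
  omega
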